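/- arXiv:1307.2781 — 4 statements merged into one kernel-verified Lean document; each statement's English description precedes it below -/
import Mathlib

section
/- For every measurable function m : ℝ → [0,1], the absolute value of ∫ x·m(x) dγ¹(x) (integral against the standard one-dimensional Gaussian measure γ¹) is at most q(∫ m(x) dγ¹(x)), where q(s) = -∫_{-∞}^{Φ⁻¹(s)} x dγ¹(x) and Φ is the standard Gaussian CDF. -/
open MeasureTheory ProbabilityTheory Real Set Filter

noncomputable def gamma1 : Measure ℝ := gaussianReal 0 1

noncomputable def Phi (t : ℝ) : ℝ :=
  ∫ s in Set.Iic t, (Real.sqrt (2 * Real.pi))⁻¹ * Real.exp (-s ^ 2 / 2)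

noncomputable def Psi : ℝ → ℝ := Function.invFun Phi

/-- q defined via the integral against the standard Gaussian measure. -/
noncomputable def qfun (s : ℝ) : ℝ := -∫ x in Set.Iic (Psi s), x ∂gamma1

/-!
Bathtub principle: let `s = ∫ m dγ` and `γ(-∞, t] = s`. Since `0 ≤ m ≤ 1`, the function
`(x - t)(m(x) - 1_{x ≤ t})` is nonnegative; integrating it, the `t`-terms cancel because both
`m` and `1_{x ≤ t}` have mass `s`, so `∫_{-∞}^t x dγ ≤ ∫ x m(x) dγ`. With `t = Ψ(s)` the left
side is `-q(s)`. By the symmetry of `γ`, `1 - m` has the mass `1 - s` of `(-∞, -t]`, and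
`∫_{-∞}^{-t} x dγ = ∫_{-∞}^t x dγ`; the same inequality for `1 - m` gives `∫ x m(x) dγ ≤ q(s)`.
For `s ∈ {0, 1}` there is no such `t` and `Ψ s` is a junk value of `Function.invFun`; but then
`m = 0` resp. `m = 1` almost everywhere, the first moment vanishes, and `q ≥ 0` everywhere.
-/

section Bathtub

variable {μ : Measure ℝ} {m : ℝ → ℝ}

lemma integrable_of_mem_Icc [IsFiniteMeasure μ] (hm : Measurable m)
    (hm01 : ∀ x, m x ∈ Icc (0 : ℝ) 1) : Integrable m μ :=
  .of_bound hm.aestronglyMeasurable 1 (ae_of_all _ fun x ↦ by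
    rw [Real.norm_eq_abs, abs_of_nonneg (hm01 x).1]; exact (hm01 x).2)

lemma integrable_id_mul_of_mem_Icc (hint : Integrable (fun x ↦ x) μ) (hm : Measurable m)
    (hm01 : ∀ x, m x ∈ Icc (0 : ℝ) 1) : Integrable (fun x ↦ x * m x) μ :=
  Integrable.mul_bdd hint hm.aestronglyMeasurable (ae_of_all _ fun x ↦ by
    rw [Real.norm_eq_abs, abs_of_nonneg (hm01 x).1]; exact (hm01 x).2)

theorem setIntegral_Iic_le_integral_id_mul [IsFiniteMeasure μ] (hint : Integrable (fun x ↦ x) μ)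
    (hm : Measurable m) (hm01 : ∀ x, m x ∈ Icc (0 : ℝ) 1) {t : ℝ}
    (ht : μ.real (Iic t) = ∫ x, m x ∂μ) :
    ∫ x in Iic t, x ∂μ ≤ ∫ x, x * m x ∂μ := by
  set χ : ℝ → ℝ := (Iic t).indicator 1
  have hχ : ∀ x, χ x ∈ Icc (0 : ℝ) 1 := fun x ↦ by
    by_cases hx : x ∈ Iic t <;> simp [χ, hx]
  have hχm : Measurable χ := measurable_const.indicator measurableSet_Iic
  have h_sign : ∀ x, 0 ≤ (x - t) * (m x - χ x) := by
    intro x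
    by_cases hx : x ≤ t
    · simp only [χ, indicator_of_mem (show x ∈ Iic t from hx), Pi.one_apply]
      exact mul_nonneg_of_nonpos_of_nonpos (by linarith) (by linarith [(hm01 x).2])
    · simp only [χ, indicator_of_notMem (show x ∉ Iic t from hx)]
      exact mul_nonneg (by linarith) (by linarith [(hm01 x).1])
  have h_left : ∫ x in Iic t, x ∂μ = ∫ x, x * χ x ∂μ := by
    rw [← integral_indicator measurableSet_Iic]
    congr 1 with x
    by_cases hx : x ∈ Iic t <;> simp [χ, hx]
  have h_mass : ∫ x, χ x ∂μ = ∫ x, m x ∂μ := by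
    rw [integral_indicator_one measurableSet_Iic, ht]
  have hmi : Integrable (fun x ↦ m x) μ := integrable_of_mem_Icc hm hm01
  have hχi : Integrable (fun x ↦ χ x) μ := integrable_of_mem_Icc hχm hχ
  have hxm : Integrable (fun x ↦ x * m x) μ := integrable_id_mul_of_mem_Icc hint hm hm01
  have hxχ : Integrable (fun x ↦ x * χ x) μ := integrable_id_mul_of_mem_Icc hint hχm hχ
  have hmχ : Integrable (fun x ↦ m x - χ x) μ := hmi.sub hχi
  have h_diff : ∫ x, (x - t) * (m x - χ x) ∂μ = ∫ x, x * m x ∂μ - ∫ x in Iic t, x ∂μ :=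
    calc ∫ x, (x - t) * (m x - χ x) ∂μ
        = ∫ x, (x * m x - x * χ x) - t * (m x - χ x) ∂μ := by congr 1 with x; ring
      _ = (∫ x, x * m x ∂μ - ∫ x, x * χ x ∂μ) - t * (∫ x, m x ∂μ - ∫ x, χ x ∂μ) := by
        rw [integral_sub (f := fun x ↦ x * m x - x * χ x) (hxm.sub hxχ) (hmχ.const_mul t),
          integral_sub hxm hxχ, integral_const_mul, integral_sub hmi hχi]
      _ = ∫ x, x * m x ∂μ - ∫ x in Iic t, x ∂μ := by rw [h_mass, h_left]; ring
  have h_nonneg : 0 ≤ ∫ x, (x - t) * (m x - χ x) ∂μ := integral_nonneg h_sign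
  linarith

end Bathtub

lemma integral_mul_eq_zero_of_integral_eq_zero {α : Type*} [MeasurableSpace α] {μ : Measure α}
    {f m : α → ℝ} (hm : 0 ≤ m) (hmi : Integrable m μ) (h : ∫ x, m x ∂μ = 0) :
    ∫ x, f x * m x ∂μ = 0 :=
  integral_eq_zero_of_ae <| ((integral_eq_zero_iff_of_nonneg hm hmi).1 h).mono fun x hx ↦ by
    simp [hx]

section Symmetric

variable {μ : Measure ℝ} {m : ℝ → ℝ} (hμ : μ.map (fun x ↦ -x) = μ)
include hμ

lemma measureReal_Iic_neg [IsProbabilityMeasure μ] [NullSingletonClass μ] (t : ℝ) :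
    μ.real (Iic (-t)) = 1 - μ.real (Iic t) := by
  have h := map_measureReal_apply (μ := μ) (f := fun x ↦ -x) measurable_neg
    (measurableSet_Iio (a := -t))
  rw [hμ, neg_preimage, neg_Iio, neg_neg, ← compl_Iic] at h
  rw [measureReal_congr (Iio_ae_eq_Iic (μ := μ)).symm, h,
    probReal_compl_eq_one_sub measurableSet_Iic]

lemma integral_id_eq_zero_of_map_neg : ∫ x, x ∂μ = 0 := by
  have h : ∫ x, x ∂μ = -∫ x, x ∂μ := by
    conv_lhs => rw [← hμ]
    rw [integral_map (φ := fun x ↦ -x) measurable_neg.aemeasurable (f := fun x ↦ x)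
      aestronglyMeasurable_id, integral_neg]
  linarith

lemma setIntegral_Iic_neg_id [NullSingletonClass μ] (hint : Integrable (fun x ↦ x) μ) (t : ℝ) :
    ∫ x in Iic (-t), x ∂μ = ∫ x in Iic t, x ∂μ := by
  have h_Ioi : ∫ x in Iic (-t), x ∂μ = -∫ x in Ioi t, x ∂μ := by
    rw [integral_Iic_eq_integral_Iio]
    conv_lhs => rw [← hμ]
    rw [setIntegral_map (f := fun x ↦ x) measurableSet_Iio aestronglyMeasurable_id
      (g := fun x ↦ -x) measurable_neg.aemeasurable,
      neg_preimage, neg_Iio, neg_neg, integral_neg]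
  have h_split := intervalIntegral.integral_Iic_add_Ioi (b := t) hint.integrableOn hint.integrableOn
  rw [integral_id_eq_zero_of_map_neg hμ] at h_split
  linarith

lemma setIntegral_Iic_id_nonpos [NullSingletonClass μ] (hint : Integrable (fun x ↦ x) μ)
    (a : ℝ) : ∫ x in Iic a, x ∂μ ≤ 0 := by
  wlog ha : a ≤ 0 generalizing a
  · rw [← setIntegral_Iic_neg_id hμ hint]
    exact this (-a) (by linarith)
  exact setIntegral_nonpos measurableSet_Iic fun x hx ↦ hx.trans ha

lemma integral_id_mul_one_sub (hint : Integrable (fun x ↦ x) μ) (hm : Measurable m)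
    (hm01 : ∀ x, m x ∈ Icc (0 : ℝ) 1) :
    ∫ x, x * (1 - m x) ∂μ = -∫ x, x * m x ∂μ := by
  simp_rw [mul_sub, mul_one]
  rw [integral_sub hint (integrable_id_mul_of_mem_Icc hint hm hm01),
    integral_id_eq_zero_of_map_neg hμ, zero_sub]

lemma integral_id_mul_eq_zero_of_integral_eq_one [IsProbabilityMeasure μ]
    (hint : Integrable (fun x ↦ x) μ) (hm : Measurable m) (hm01 : ∀ x, m x ∈ Icc (0 : ℝ) 1)
    (h : ∫ x, m x ∂μ = 1) : ∫ x, x * m x ∂μ = 0 := by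
  have h_compl : ∫ x, x * (1 - m x) ∂μ = 0 :=
    integral_mul_eq_zero_of_integral_eq_zero (fun x ↦ sub_nonneg.2 (hm01 x).2)
      ((integrable_const 1).sub (integrable_of_mem_Icc hm hm01))
      (by rw [integral_sub (integrable_const 1) (integrable_of_mem_Icc hm hm01), h]; simp)
  rwa [integral_id_mul_one_sub hμ hint hm hm01, neg_eq_zero] at h_compl

theorem abs_integral_id_mul_le_of_measureReal_Iic_eq [IsProbabilityMeasure μ]
    [NullSingletonClass μ] (hint : Integrable (fun x ↦ x) μ) (hm : Measurable m)
    (hm01 : ∀ x, m x ∈ Icc (0 : ℝ) 1) {t : ℝ} (ht : μ.real (Iic t) = ∫ x, m x ∂μ) :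
    |∫ x, x * m x ∂μ| ≤ -∫ x in Iic t, x ∂μ := by
  have hm' : Measurable fun x ↦ 1 - m x := measurable_const.sub hm
  have hm01' : ∀ x, 1 - m x ∈ Icc (0 : ℝ) 1 := fun x ↦
    ⟨sub_nonneg.2 (hm01 x).2, by linarith [(hm01 x).1]⟩
  have ht' : μ.real (Iic (-t)) = ∫ x, 1 - m x ∂μ := by
    rw [measureReal_Iic_neg hμ, ht, integral_sub (integrable_const 1)
      (integrable_of_mem_Icc hm hm01)]
    simp
  have lower := setIntegral_Iic_le_integral_id_mul hint hm hm01 ht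
  have upper := setIntegral_Iic_le_integral_id_mul hint hm' hm01' ht'
  rw [setIntegral_Iic_neg_id hμ hint, integral_id_mul_one_sub hμ hint hm hm01] at upper
  exact abs_le.2 ⟨by linarith, by linarith⟩

end Symmetric

instance : IsProbabilityMeasure gamma1 := inferInstanceAs (IsProbabilityMeasure (gaussianReal 0 1))

instance : NullSingletonClass gamma1 := nullSingletonClass_gaussianReal one_ne_zero

lemma gamma1_map_neg : gamma1.map (fun x ↦ -x) = gamma1 := by
  rw [gamma1, gaussianReal_map_neg, neg_zero]

lemma integrable_id_gamma1 : Integrable (fun x ↦ x) gamma1 :=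
  (memLp_id_gaussianReal 1).integrable le_rfl

lemma Phi_eq_integral_gaussianPDFReal (t : ℝ) :
    Phi t = ∫ x in Iic t, gaussianPDFReal 0 1 x := by
  simp only [Phi, gaussianPDFReal, NNReal.coe_one, mul_one, sub_zero]

lemma Phi_eq_measureReal (t : ℝ) : Phi t = gamma1.real (Iic t) := by
  rw [Phi_eq_integral_gaussianPDFReal, measureReal_def, gamma1,
    gaussianReal_apply_eq_integral 0 one_ne_zero,
    ENNReal.toReal_ofReal (integral_nonneg fun x ↦ gaussianPDFReal_nonneg _ _ _)]

lemma continuous_Phi : Continuous Phi := by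
  refine continuous_iff_continuousAt.2 fun t ↦ ?_
  have h : ContinuousOn Phi (Iic (t + 1)) := by
    rw [funext Phi_eq_integral_gaussianPDFReal]
    exact (integrable_gaussianPDFReal 0 1).integrableOn.continuousOn_Iic_primitive_Iic
  exact h.continuousAt (Iic_mem_nhds (by linarith))

lemma Phi_Psi {s : ℝ} (hs0 : 0 < s) (hs1 : s < 1) : Phi (Psi s) = s := by
  have h_cdf : Phi = cdf gamma1 := funext fun t ↦ by rw [Phi_eq_measureReal, cdf_eq_real]
  obtain ⟨a, ha⟩ := ((h_cdf ▸ tendsto_cdf_atBot gamma1).eventually_lt_const hs0).exists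
  obtain ⟨b, hb⟩ := ((h_cdf ▸ tendsto_cdf_atTop gamma1).eventually_const_lt hs1).exists
  exact Function.invFun_eq (intermediate_value_univ a b continuous_Phi ⟨ha.le, hb.le⟩)

lemma qfun_nonneg (s : ℝ) : 0 ≤ qfun s :=
  neg_nonneg.2 (setIntegral_Iic_id_nonpos gamma1_map_neg integrable_id_gamma1 _)

theorem center_of_mass_bound (m : ℝ → ℝ) (hm : Measurable m)
    (hm01 : ∀ x, m x ∈ Set.Icc (0 : ℝ) 1) :
    |∫ x, x * m x ∂gamma1| ≤ qfun (∫ x, m x ∂gamma1) := by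
  set s := ∫ x, m x ∂gamma1
  have hmi : Integrable m gamma1 := integrable_of_mem_Icc hm hm01
  have hs_le : s ≤ 1 := by
    simpa using integral_mono hmi (integrable_const 1) fun x ↦ (hm01 x).2
  rcases (integral_nonneg fun x ↦ (hm01 x).1 : 0 ≤ s).eq_or_lt with hs0 | hs0
  · rw [integral_mul_eq_zero_of_integral_eq_zero (fun x ↦ (hm01 x).1) hmi hs0.symm, abs_zero]
    exact qfun_nonneg s
  rcases hs_le.eq_or_lt with hs1 | hs1
  · rw [integral_id_mul_eq_zero_of_integral_eq_one gamma1_map_neg integrable_id_gamma1 hm hm01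
      hs1, abs_zero]
    exact qfun_nonneg s
  exact abs_integral_id_mul_le_of_measureReal_Iic_eq gamma1_map_neg integrable_id_gamma1 hm hm01
    (by rw [← Phi_eq_measureReal, Phi_Psi hs0 hs1])
end

section
/- There exist universal constants c, C > 0 such that for all 0 < s < 1: c·s(1−s) ≤ q(s) ≤ C·s(1−s)·√(|log(s(1−s))|), where q(s) = (2π)^{-1/2} e^{-Ψ(s)²/2} and Ψ is the inverse standard Gaussian CDF. In particular one may take c = 4/√(2π) for the lower bound. -/
/-!
Write φ for the standard Gaussian density. Since q(Φ t) = φ t, both bounds compare φ t with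
Φ t (1 - Φ t); everything is symmetric under t ↦ -t, so let t ≥ 0.

Lower bound: f = φ - (4 / √(2π)) Φ (1 - Φ) vanishes at 0 and at ∞, and f' = φ h with
h = (4 / √(2π)) (2Φ - 1) - t concave on [0, ∞) and h 0 = 0. So f' changes sign at most once,
from + to -, and f stays nonnegative. The constant 4 / √(2π) = 4 φ 0 is the one making f 0 = 0.

Upper bound: the Chernoff bound 1 - Φ t ≤ e^{-t²/2} gives t² ≤ 2 |log (Φ t (1 - Φ t))|, and
the Mills-ratio estimate φ t ≤ (1 + t)(1 - Φ t), proved by the same sign-change argument,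
finishes, as 1 - Φ t ≤ 2 Φ t (1 - Φ t).
-/

open MeasureTheory ProbabilityTheory Real Set Filter

noncomputable def q2 (s : ℝ) : ℝ := (Real.sqrt (2 * Real.pi))⁻¹ * Real.exp (-(Psi s) ^ 2 / 2)

open Topology

local notation "φ" => gaussianPDFReal 0 1

theorem nonneg_of_tendsto_zero_of_deriv_sign_change {f f' : ℝ → ℝ} {a t : ℝ}
    (hf : ∀ x, a ≤ x → HasDerivAt f (f' x) x) (ha : 0 ≤ f a) (hlim : Tendsto f atTop (𝓝 0))
    (hsign : ∀ x y, a ≤ x → x ≤ y → f' x < 0 → f' y ≤ 0) (ht : a ≤ t) : 0 ≤ f t := by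
  have hcont : ∀ D ⊆ Ici a, ContinuousOn f D := fun D hD x hx =>
    (hf x (hD hx)).continuousAt.continuousWithinAt
  by_cases hpos : ∀ x ∈ Icc a t, 0 ≤ f' x
  · have hmono : MonotoneOn f (Icc a t) :=
      monotoneOn_of_hasDerivWithinAt_nonneg (convex_Icc a t) (hcont _ Icc_subset_Ici_self)
        (fun x hx => (hf x (interior_subset hx).1).hasDerivWithinAt)
        (fun x hx => hpos x (interior_subset hx))
    exact ha.trans (hmono (left_mem_Icc.2 ht) (right_mem_Icc.2 ht) ht)
  · push Not at hpos
    obtain ⟨x, hx, hx'⟩ := hpos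
    have hanti : AntitoneOn f (Ici t) :=
      antitoneOn_of_hasDerivWithinAt_nonpos (convex_Ici t) (hcont _ (Ici_subset_Ici.2 ht))
        (fun y hy => (hf y (ht.trans (interior_subset hy))).hasDerivWithinAt)
        (fun y hy => hsign x y hx.1 (hx.2.trans (interior_subset hy)) hx')
    exact le_of_tendsto hlim ((eventually_ge_atTop t).mono fun y hy => hanti self_mem_Ici hy hy)

theorem ConcaveOn.neg_of_le {h : ℝ → ℝ} {a x y : ℝ} (hh : ConcaveOn ℝ (Ici a) h) (ha : 0 ≤ h a)
    (hax : a ≤ x) (hxy : x ≤ y) (hx : h x < 0) : h y < 0 := by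
  obtain rfl | hxy := hxy.eq_or_lt
  · exact hx
  have hax : a < x := hax.lt_of_ne (by rintro rfl; linarith)
  have hslope := hh.slope_anti_adjacent self_mem_Ici (hax.trans hxy).le hax hxy
  have hneg : (h x - h a) / (x - a) < 0 := div_neg_of_neg_of_pos (by linarith) (by linarith)
  have := (div_lt_iff₀ (sub_pos.2 hxy)).1 (hslope.trans_lt hneg)
  linarith

lemma tendsto_exp_neg_sq_div_two_atTop : Tendsto (fun t : ℝ => exp (-t ^ 2 / 2)) atTop (𝓝 0) := by
  refine tendsto_exp_atBot.comp ?_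
  simp_rw [neg_div]
  exact tendsto_neg_atTop_atBot.comp ((tendsto_pow_atTop two_ne_zero).atTop_div_const two_pos)

lemma gaussianPDFReal_zero_one (x : ℝ) : φ x = (√(2 * π))⁻¹ * exp (-x ^ 2 / 2) := by
  simp [gaussianPDFReal]

lemma gaussianPDFReal_zero_one_neg (x : ℝ) : φ (-x) = φ x := by
  simp [gaussianPDFReal_zero_one]

lemma gaussianPDFReal_zero_one_zero : φ 0 = (√(2 * π))⁻¹ := by
  simp [gaussianPDFReal_zero_one]

lemma hasDerivAt_gaussianPDFReal_zero_one (x : ℝ) : HasDerivAt φ (-x * φ x) x := by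
  have hq : HasDerivAt (fun y : ℝ => -y ^ 2 / 2) (-x) x :=
    ((hasDerivAt_pow 2 x).fun_neg.div_const 2).congr_deriv (by push_cast; ring)
  rw [show φ = fun y => (√(2 * π))⁻¹ * exp (-y ^ 2 / 2) from funext gaussianPDFReal_zero_one]
  exact (hq.exp.const_mul _).congr_deriv (by ring)

lemma antitoneOn_gaussianPDFReal_zero_one : AntitoneOn φ (Ici 0) := by
  intro x hx y _ hxy
  simp only [gaussianPDFReal_zero_one]
  gcongr

lemma tendsto_gaussianPDFReal_zero_one_atTop : Tendsto φ atTop (𝓝 0) := by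
  have h := tendsto_exp_neg_sq_div_two_atTop.const_mul (√(2 * π))⁻¹
  rw [mul_zero] at h
  exact h.congr fun x => (gaussianPDFReal_zero_one x).symm

lemma Phi_eq_setIntegral (t : ℝ) : Phi t = ∫ x in Iic t, φ x := by
  simp only [Phi, gaussianPDFReal_zero_one]

instance inst_s6 : IsProbabilityMeasure gamma1 := by
  unfold gamma1
  infer_instance

lemma Phi_eq_cdf : Phi = cdf gamma1 := by
  ext t
  rw [cdf_eq_real, measureReal_def, gamma1, gaussianReal_apply_eq_integral _ one_ne_zero,
    ENNReal.toReal_ofReal (setIntegral_nonneg measurableSet_Iic fun x _ ↦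
      gaussianPDFReal_nonneg 0 1 x), Phi_eq_setIntegral]

lemma tendsto_Phi_atTop : Tendsto Phi atTop (𝓝 1) := Phi_eq_cdf ▸ tendsto_cdf_atTop _

lemma tendsto_Phi_atBot : Tendsto Phi atBot (𝓝 0) := Phi_eq_cdf ▸ tendsto_cdf_atBot _

lemma Phi_le_one (t : ℝ) : Phi t ≤ 1 := Phi_eq_cdf ▸ cdf_le_one _ t

lemma one_sub_Phi_eq_measureReal_Ioi (t : ℝ) : 1 - Phi t = gamma1.real (Ioi t) := by
  rw [Phi_eq_cdf, cdf_eq_real, ← compl_Iic, probReal_compl_eq_one_sub measurableSet_Iic]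

lemma hasDerivAt_Phi (t : ℝ) : HasDerivAt Phi (φ t) t := by
  have hint := integrable_gaussianPDFReal 0 1
  have hcont : Continuous φ := by
    rw [show φ = fun x => (√(2 * π))⁻¹ * exp (-x ^ 2 / 2) from funext gaussianPDFReal_zero_one]
    fun_prop
  have hPhi : Phi = fun u => Phi 0 + ∫ x in (0 : ℝ)..u, φ x := by
    ext u
    rw [← intervalIntegral.integral_Iic_sub_Iic hint.integrableOn hint.integrableOn,
      Phi_eq_setIntegral, Phi_eq_setIntegral]
    ring
  rw [hPhi]
  exact (intervalIntegral.integral_hasDerivAt_right hint.intervalIntegrable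
    (hcont.stronglyMeasurableAtFilter _ _) hcont.continuousAt).const_add _

lemma Phi_neg (t : ℝ) : Phi (-t) = 1 - Phi t := by
  have hint := integrable_gaussianPDFReal 0 1
  have hsplit := intervalIntegral.integral_Iic_add_Ioi (b := t) hint.integrableOn hint.integrableOn
  have hreflect : ∫ x in Iic (-t), φ x = ∫ x in Ioi t, φ x := by
    simpa [gaussianPDFReal_zero_one_neg] using integral_comp_neg_Iic (-t) φ
  rw [integral_gaussianPDFReal_eq_one 0 one_ne_zero] at hsplit
  rw [Phi_eq_setIntegral, Phi_eq_setIntegral, hreflect]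
  linarith

lemma Phi_zero : Phi 0 = 1 / 2 := by
  linarith [neg_zero (G := ℝ) ▸ Phi_neg 0]

lemma strictMono_Phi : StrictMono Phi :=
  strictMono_of_hasDerivAt_pos hasDerivAt_Phi fun t => gaussianPDFReal_pos 0 1 t one_ne_zero

lemma Phi_lt_one (t : ℝ) : Phi t < 1 :=
  (strictMono_Phi (lt_add_one t)).trans_le (Phi_le_one _)

lemma Phi_neg_mul_one_sub_Phi_neg (t : ℝ) :
    Phi (-t) * (1 - Phi (-t)) = Phi t * (1 - Phi t) := by
  rw [Phi_neg, sub_sub_cancel, mul_comm]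

lemma exists_Phi_eq {s : ℝ} (hs : s ∈ Ioo (0 : ℝ) 1) : ∃ t, Phi t = s :=
  intermediate_value_univ₂_eventually₂
    (continuous_iff_continuousAt.2 fun t => (hasDerivAt_Phi t).continuousAt)
    continuous_const (tendsto_Phi_atBot.eventually_le_const hs.1)
    (tendsto_Phi_atTop.eventually_const_le hs.2)

lemma q2_Phi (t : ℝ) : q2 (Phi t) = φ t := by
  rw [q2, Psi, Function.leftInverse_invFun strictMono_Phi.injective t, gaussianPDFReal_zero_one]

lemma one_sub_Phi_le_exp {t : ℝ} (ht : 0 ≤ t) : 1 - Phi t ≤ exp (-t ^ 2 / 2) := by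
  rw [one_sub_Phi_eq_measureReal_Ioi]
  calc gamma1.real (Ioi t) ≤ gamma1.real {x | t ≤ id x} :=
        measureReal_mono fun x (hx : t < x) => show t ≤ x from hx.le
    _ ≤ exp (-t * t) * mgf id gamma1 t :=
      measure_ge_le_exp_mul_mgf t ht (integrable_exp_mul_gaussianReal t)
    _ = exp (-t ^ 2 / 2) := by
      rw [gamma1, mgf_id_gaussianReal, ← exp_add]
      push_cast
      ring_nf

lemma tendsto_one_add_mul_one_sub_Phi_atTop :
    Tendsto (fun t => (1 + t) * (1 - Phi t)) atTop (𝓝 0) := by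
  have hlim := (((tendsto_pow_mul_exp_neg_atTop_nhds_zero 0).add
    (tendsto_pow_mul_exp_neg_atTop_nhds_zero 1)).comp
    ((tendsto_pow_atTop two_ne_zero).atTop_div_const (two_pos (α := ℝ)))).const_mul 2
  rw [add_zero, mul_zero] at hlim
  refine squeeze_zero' ?_ ?_ hlim
  · filter_upwards [eventually_ge_atTop 0] with t ht
    exact mul_nonneg (by linarith) (sub_nonneg.2 (Phi_le_one t))
  · filter_upwards [eventually_ge_atTop 0] with t ht
    calc (1 + t) * (1 - Phi t) ≤ (1 + t) * exp (-t ^ 2 / 2) := by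
          gcongr
          exact one_sub_Phi_le_exp ht
      _ ≤ (2 + t ^ 2) * exp (-t ^ 2 / 2) :=
          mul_le_mul_of_nonneg_right (by nlinarith [sq_nonneg (t - 1)]) (exp_pos _).le
      _ = _ := by simp only [Function.comp_apply]; ring_nf

lemma one_sub_Phi_sub_gaussianPDFReal_nonpos_of_le {x y : ℝ} (hxy : x ≤ y)
    (hx : 1 - Phi x - φ x < 0) : 1 - Phi y - φ y ≤ 0 := by
  set g : ℝ → ℝ := fun x => 1 - Phi x - φ x
  have hg : ∀ x, HasDerivAt g ((x - 1) * φ x) x := fun x =>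
    (((hasDerivAt_Phi x).const_sub 1).sub (hasDerivAt_gaussianPDFReal_zero_one x)).congr_deriv
      (by ring)
  have hg_cont : Continuous g := continuous_iff_continuousAt.2 fun x => (hg x).continuousAt
  rcases le_or_gt 1 y with hy | hy
  · have hg_mono : MonotoneOn g (Ici 1) :=
      monotoneOn_of_hasDerivWithinAt_nonneg (convex_Ici 1) hg_cont.continuousOn
        (fun x _ => (hg x).hasDerivWithinAt) fun x hx =>
          mul_nonneg (sub_nonneg.2 (interior_subset hx : x ∈ Ici 1)) (gaussianPDFReal_nonneg 0 1 x)
    have hg_lim : Tendsto g atTop (𝓝 0) := by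
      simpa using (tendsto_Phi_atTop.const_sub 1).sub tendsto_gaussianPDFReal_zero_one_atTop
    exact ge_of_tendsto hg_lim
      ((eventually_ge_atTop y).mono fun z hz => hg_mono hy (hy.trans hz) hz)
  · have hg_anti : AntitoneOn g (Iic 1) :=
      antitoneOn_of_hasDerivWithinAt_nonpos (convex_Iic 1) hg_cont.continuousOn
        (fun x _ => (hg x).hasDerivWithinAt) fun x hx =>
          mul_nonpos_of_nonpos_of_nonneg (sub_nonpos.2 (interior_subset hx : x ∈ Iic 1))
            (gaussianPDFReal_nonneg 0 1 x)
    exact (hg_anti (hxy.trans hy.le) hy.le hxy).trans hx.le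

lemma gaussianPDFReal_zero_one_le_one_add_mul_one_sub_Phi {t : ℝ} (ht : 0 ≤ t) :
    φ t ≤ (1 + t) * (1 - Phi t) := by
  refine sub_nonneg.1 (nonneg_of_tendsto_zero_of_deriv_sign_change
    (f := fun x => (1 + x) * (1 - Phi x) - φ x) (f' := fun x => 1 - Phi x - φ x) (a := 0)
    ?_ ?_ ?_ ?_ ht)
  · intro x _
    exact ((((hasDerivAt_id x).const_add 1).mul ((hasDerivAt_Phi x).const_sub 1)).sub
      (hasDerivAt_gaussianPDFReal_zero_one x)).congr_deriv (by rw [id]; ring)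
  · have h2 : 2 ≤ √(2 * π) := Real.le_sqrt_of_sq_le (by nlinarith [pi_gt_three])
    have := inv_anti₀ two_pos h2
    rw [← gaussianPDFReal_zero_one_zero] at this
    show 0 ≤ (1 + 0) * (1 - Phi 0) - φ 0
    rw [Phi_zero]
    linarith
  · simpa using tendsto_one_add_mul_one_sub_Phi_atTop.sub tendsto_gaussianPDFReal_zero_one_atTop
  · exact fun x y _ hxy hx => one_sub_Phi_sub_gaussianPDFReal_nonpos_of_le hxy hx

lemma four_div_sqrt_two_pi_mul_Phi_mul_one_sub_Phi_le_of_nonneg {t : ℝ} (ht : 0 ≤ t) :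
    4 / √(2 * π) * (Phi t * (1 - Phi t)) ≤ φ t := by
  set c := 4 / √(2 * π)
  set h : ℝ → ℝ := fun x => c * (2 * Phi x - 1) - x
  have hh : ∀ x, HasDerivAt h (2 * c * φ x - 1) x := fun x =>
    (((((hasDerivAt_Phi x).const_mul 2).sub_const 1).const_mul c).sub
      (hasDerivAt_id x)).congr_deriv (by ring)
  have hh_cont : Continuous h := continuous_iff_continuousAt.2 fun x => (hh x).continuousAt
  have hconc : ConcaveOn ℝ (Ici 0) h := by
    refine AntitoneOn.concaveOn_of_deriv (convex_Ici 0) hh_cont.continuousOn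
      (fun x _ => (hh x).differentiableAt.differentiableWithinAt) ?_
    rw [interior_Ici]
    intro x hx y hy hxy
    rw [(hh x).deriv, (hh y).deriv]
    have := antitoneOn_gaussianPDFReal_zero_one (mem_Ici.2 (le_of_lt hx)) (mem_Ici.2 (le_of_lt hy))
      hxy
    gcongr
  refine sub_nonneg.1 (nonneg_of_tendsto_zero_of_deriv_sign_change
    (f := fun x => φ x - c * (Phi x * (1 - Phi x))) (f' := fun x => φ x * h x) (a := 0)
    ?_ ?_ ?_ ?_ ht)
  · intro x _
    exact ((hasDerivAt_gaussianPDFReal_zero_one x).sub (((hasDerivAt_Phi x).mul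
      ((hasDerivAt_Phi x).const_sub 1)).const_mul c)).congr_deriv (by simp only [h]; ring)
  · show 0 ≤ φ 0 - c * (Phi 0 * (1 - Phi 0))
    rw [Phi_zero, gaussianPDFReal_zero_one_zero]
    exact le_of_eq (by ring)
  · simpa using tendsto_gaussianPDFReal_zero_one_atTop.sub
      ((tendsto_Phi_atTop.mul (tendsto_Phi_atTop.const_sub 1)).const_mul c)
  · intro x y hx hxy hneg
    have hx' : h x < 0 := neg_of_mul_neg_right hneg (gaussianPDFReal_nonneg 0 1 x)
    have hy : h y < 0 := hconc.neg_of_le (by simp [h, Phi_zero]) hx hxy hx'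
    exact mul_nonpos_of_nonneg_of_nonpos (gaussianPDFReal_nonneg 0 1 y) hy.le

lemma four_div_sqrt_two_pi_mul_Phi_mul_one_sub_Phi_le (t : ℝ) :
    4 / √(2 * π) * (Phi t * (1 - Phi t)) ≤ φ t := by
  rcases le_total 0 t with ht | ht
  · exact four_div_sqrt_two_pi_mul_Phi_mul_one_sub_Phi_le_of_nonneg ht
  · simpa only [Phi_neg_mul_one_sub_Phi_neg, gaussianPDFReal_zero_one_neg] using
      four_div_sqrt_two_pi_mul_Phi_mul_one_sub_Phi_le_of_nonneg (neg_nonneg.2 ht)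

lemma gaussianPDFReal_zero_one_le_of_nonneg {t : ℝ} (ht : 0 ≤ t) :
    φ t ≤ 6 * (Phi t * (1 - Phi t)) * √|log (Phi t * (1 - Phi t))| := by
  set s := Phi t
  set u := 1 - Phi t
  have hs : 1 / 2 ≤ s := Phi_zero ▸ strictMono_Phi.monotone ht
  have hu : 0 < u := sub_pos.2 (Phi_lt_one t)
  have hsu : 0 < s * u := mul_pos (by linarith) hu
  set L := -log (s * u)
  have hL : 1 ≤ L := by
    have : s * u ≤ exp (-1) := by
      have : (4 : ℝ)⁻¹ ≤ (exp 1)⁻¹ := inv_anti₀ (exp_pos 1) (by linarith [exp_one_lt_d9])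
      rw [exp_neg]
      nlinarith
    have := (log_le_iff_le_exp hsu).2 this
    linarith
  have ht2 : t ^ 2 ≤ 2 * L := by
    have hlogu : log u ≤ -t ^ 2 / 2 := (log_le_iff_le_exp hu).2 (one_sub_Phi_le_exp ht)
    have hlogs : log s ≤ 0 := log_nonpos (by linarith) (Phi_le_one t)
    have : L = -(log s + log u) := by rw [← log_mul (by positivity) hu.ne']
    linarith
  have h1t : 1 + t ≤ 3 * √L := by
    nlinarith [sq_sqrt (by linarith : (0 : ℝ) ≤ L), sqrt_nonneg L, sq_nonneg (1 - t)]
  calc φ t ≤ (1 + t) * u := gaussianPDFReal_zero_one_le_one_add_mul_one_sub_Phi ht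
    _ ≤ 3 * √L * (2 * (s * u)) := by
        gcongr
        nlinarith
    _ = 6 * (s * u) * √|log (s * u)| := by
        rw [abs_of_neg (log_neg hsu (by nlinarith))]
        ring

lemma gaussianPDFReal_zero_one_le (t : ℝ) :
    φ t ≤ 6 * (Phi t * (1 - Phi t)) * √|log (Phi t * (1 - Phi t))| := by
  rcases le_total 0 t with ht | ht
  · exact gaussianPDFReal_zero_one_le_of_nonneg ht
  · simpa only [Phi_neg_mul_one_sub_Phi_neg, gaussianPDFReal_zero_one_neg] using
      gaussianPDFReal_zero_one_le_of_nonneg (neg_nonneg.2 ht)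

theorem q_two_sided_estimate :
    (∃ c > (0 : ℝ), ∃ C > (0 : ℝ), ∀ s ∈ Set.Ioo (0 : ℝ) 1,
      c * (s * (1 - s)) ≤ q2 s ∧
      q2 s ≤ C * (s * (1 - s)) * Real.sqrt |Real.log (s * (1 - s))|) ∧
    (∀ s ∈ Set.Ioo (0 : ℝ) 1, 4 / Real.sqrt (2 * Real.pi) * (s * (1 - s)) ≤ q2 s) := by
  have lower : ∀ s ∈ Ioo (0 : ℝ) 1, 4 / √(2 * π) * (s * (1 - s)) ≤ q2 s := by
    intro s hs
    obtain ⟨t, rfl⟩ := exists_Phi_eq hs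
    rw [q2_Phi]
    exact four_div_sqrt_two_pi_mul_Phi_mul_one_sub_Phi_le t
  refine ⟨⟨4 / √(2 * π), by positivity, 6, by norm_num, fun s hs => ⟨lower s hs, ?_⟩⟩, lower⟩
  obtain ⟨t, rfl⟩ := exists_Phi_eq hs
  rw [q2_Phi]
  exact gaussianPDFReal_zero_one_le t
end

section
/- Let 0 < h ≤ 1 and let f : ℝ^{n−1} → [0,1] be measurable with ∫ f dγ^{n−1} = h. Then ∫ (f(x)/h)·log(f(x)/h) dγ^{n−1}(x) ≤ h^{−2} · ∫ (q(h) − q(f(x))) dγ^{n−1}(x). -/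
open MeasureTheory ProbabilityTheory Real Set Filter

/-- q with the convention q(0)=q(1)=0 (and 0 outside [0,1]). -/
noncomputable def Q (s : ℝ) : ℝ :=
  if 0 < s ∧ s < 1 then (Real.sqrt (2 * Real.pi))⁻¹ * Real.exp (-(Psi s) ^ 2 / 2) else 0

noncomputable def stdGaussian (n : ℕ) : Measure (EuclideanSpace ℝ (Fin n)) :=
  Measure.map (MeasurableEquiv.toLp 2 (Fin n → ℝ))
    (Measure.pi fun _ : Fin n => gaussianReal 0 1)

/-!
Let `gap h t = h⁻² (q h - q t) + (h⁻¹ - h⁻² Ψ h) (t - h) - (t / h) log (t / h)`. Since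
`∫ (f - h) dγ = 0`, the theorem is the integral of the pointwise bound `0 ≤ gap h t` on `[0, 1]`
(when `h = 1`, `f = 1` almost everywhere and both sides vanish).

From `q' = -Ψ` and `Ψ' = 1 / q` one gets `gap h h = ∂ₜ gap h h = 0` and
`∂ₜ² gap h t = u t / (h² t q t)` with `u t = t - h q t`. Since `q` is concave, `u` is convex with
`u 0 = 0 < u h`, so `u ≤ 0` on some `[0, c]` and `u > 0` on `(c, 1]`, where `c < h`. Hence `gap h`
is convex on `[c, 1]`, where it is minimal at `h`, and concave on `[0, c]`, where it is at least
`min (gap h 0) (gap h c)`. Finally `h² gap h 0 = q h + h Ψ h - h²`, which increases in `h`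
(as `q < 1/2`) and tends to `0` at `0` by the Mills bound `-t Φ t ≤ φ t`.
-/

open Topology

lemma ConvexOn.exists_nonpos_Icc_pos_Ioc {u : ℝ → ℝ} {a b : ℝ} (hab : a ≤ b)
    (hu : ConvexOn ℝ (Icc a b) u) (hcont : ContinuousOn u (Icc a b)) (ha : u a ≤ 0)
    (hb : 0 < u b) :
    ∃ c ∈ Ico a b, (∀ x ∈ Icc a c, u x ≤ 0) ∧ ∀ x ∈ Ioc c b, 0 < u x := by
  set S := {x ∈ Icc a b | u x ≤ 0}
  have haS : a ∈ S := ⟨left_mem_Icc.2 hab, ha⟩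
  have hSbdd : BddAbove S := ⟨b, fun x hx => hx.1.2⟩
  have hcS : sSup S ∈ S :=
    (hcont.preimage_isClosed_of_isClosed isClosed_Icc isClosed_Iic).csSup_mem ⟨a, haS⟩ hSbdd
  refine ⟨sSup S, ⟨hcS.1.1, hcS.1.2.lt_of_ne fun hcb => (hcb ▸ hcS.2).not_gt hb⟩,
    fun x hx => ?_, fun x hx => ?_⟩
  · exact (hu.le_max_of_mem_Icc haS.1 hcS.1 hx).trans (max_le ha hcS.2)
  · exact lt_of_not_ge fun hux =>
      hx.1.not_ge (le_csSup hSbdd ⟨⟨hcS.1.1.trans hx.1.le, hx.2⟩, hux⟩)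

section Integral

variable {Ω : Type*} [MeasurableSpace Ω] {μ : Measure Ω} {f : Ω → ℝ}

lemma Continuous.integrable_comp_of_forall_mem [IsFiniteMeasure μ] {g : ℝ → ℝ} {K : Set ℝ}
    (hg : Continuous g) (hK : IsCompact K) (hf : AEStronglyMeasurable f μ)
    (hfK : ∀ x, f x ∈ K) : Integrable (fun x => g (f x)) μ := by
  obtain ⟨C, hC⟩ := hK.exists_bound_of_continuousOn hg.continuousOn
  exact .of_bound (hg.comp_aestronglyMeasurable hf) C (ae_of_all _ fun x => hC _ (hfK x))

lemma ae_eq_one_of_integral_eq_one [IsProbabilityMeasure μ] (hf : Integrable f μ)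
    (hf1 : ∀ x, f x ≤ 1) (hint : ∫ x, f x ∂μ = 1) : ∀ᵐ x ∂μ, f x = 1 := by
  have hzero : ∫ x, (1 - f x) ∂μ = 0 := by
    rw [integral_sub (integrable_const 1) hf, hint, integral_const, probReal_univ, one_smul,
      sub_self]
  filter_upwards [(integral_eq_zero_iff_of_nonneg (fun x => sub_nonneg.2 (hf1 x))
    ((integrable_const 1).sub hf)).1 hzero] with x hx
  exact (sub_eq_zero.1 hx).symm

end Integral

namespace EntropyBound

noncomputable def phi (t : ℝ) : ℝ := (Real.sqrt (2 * π))⁻¹ * rexp (-t ^ 2 / 2)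

lemma phi_eq_gaussianPDFReal : phi = gaussianPDFReal 0 1 := by
  ext t
  simp [phi, gaussianPDFReal]

lemma phi_pos (t : ℝ) : 0 < phi t :=
  phi_eq_gaussianPDFReal ▸ gaussianPDFReal_pos 0 1 t one_ne_zero

lemma integrable_phi : Integrable phi :=
  phi_eq_gaussianPDFReal ▸ integrable_gaussianPDFReal 0 1

lemma continuous_phi : Continuous phi := by
  unfold phi
  fun_prop

lemma hasDerivAt_phi (t : ℝ) : HasDerivAt phi (-t * phi t) t := by
  have hexponent : HasDerivAt (fun t : ℝ => -t ^ 2 / 2) (-t) t := by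
    simpa [neg_div] using (hasDerivAt_pow 2 t).neg.div_const 2
  exact (hexponent.exp.const_mul _).congr_deriv (by rw [phi]; ring)

lemma tendsto_phi_cocompact : Tendsto phi (cocompact ℝ) (𝓝 0) := by
  have h := (tendsto_rpow_abs_mul_exp_neg_mul_sq_cocompact (by norm_num : (0 : ℝ) < 1 / 2)
    0).const_mul (Real.sqrt (2 * π))⁻¹
  rw [mul_zero] at h
  refine h.congr fun t => ?_
  rw [rpow_zero, one_mul, phi]
  ring_nf

lemma phi_lt_half (t : ℝ) : phi t < 1 / 2 := by
  have hsqrt : 2 < Real.sqrt (2 * π) := by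
    rw [Real.lt_sqrt zero_le_two]
    nlinarith [pi_gt_three]
  have hexp : rexp (-t ^ 2 / 2) ≤ 1 := exp_le_one_iff.2 (by nlinarith [sq_nonneg t])
  calc phi t ≤ (Real.sqrt (2 * π))⁻¹ := mul_le_of_le_one_right (by positivity) hexp
    _ < 1 / 2 := by rw [one_div]; exact inv_strictAnti₀ (by norm_num) hsqrt

lemma Phi_eq_cdf : Phi = cdf (gaussianReal 0 1) := by
  ext t
  rw [cdf_eq_real, measureReal_def, gaussianReal_apply_eq_integral 0 one_ne_zero,
    ENNReal.toReal_ofReal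
      (setIntegral_nonneg measurableSet_Iic fun x _ => gaussianPDFReal_nonneg 0 1 x),
    ← phi_eq_gaussianPDFReal]
  rfl

lemma hasDerivAt_Phi (t : ℝ) : HasDerivAt Phi (phi t) t := by
  have hPhi : ∀ u, Phi u = Phi 0 + ∫ x in (0 : ℝ)..u, phi x := fun u => by
    rw [← intervalIntegral.integral_Iic_sub_Iic integrable_phi.integrableOn
      integrable_phi.integrableOn]
    exact (add_sub_cancel _ _).symm
  rw [funext hPhi]
  exact (intervalIntegral.integral_hasDerivAt_right integrable_phi.intervalIntegrable
    (continuous_phi.stronglyMeasurableAtFilter _ _) continuous_phi.continuousAt).const_add _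

lemma strictMono_Phi : StrictMono Phi :=
  strictMono_of_deriv_pos fun t => (hasDerivAt_Phi t).deriv ▸ phi_pos t

lemma continuous_Phi : Continuous Phi :=
  continuous_iff_continuousAt.2 fun t => (hasDerivAt_Phi t).continuousAt

lemma Phi_mem_Ioo (t : ℝ) : Phi t ∈ Ioo 0 1 := by
  have hmono := Phi_eq_cdf ▸ strictMono_Phi
  rw [Phi_eq_cdf]
  exact ⟨(cdf_nonneg _ (t - 1)).trans_lt (hmono (by linarith)),
    (hmono (lt_add_one t)).trans_le (cdf_le_one _ _)⟩

lemma mem_range_Phi {s : ℝ} (hs : s ∈ Ioo 0 1) : s ∈ range Phi := by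
  rw [Phi_eq_cdf]
  exact mem_range_of_exists_le_of_exists_ge (Phi_eq_cdf ▸ continuous_Phi)
    ((tendsto_cdf_atBot _).eventually_le_const hs.1).exists
    ((tendsto_cdf_atTop _).eventually_const_le hs.2).exists

lemma Psi_Phi (t : ℝ) : Psi (Phi t) = t :=
  Function.leftInverse_invFun strictMono_Phi.injective t

lemma Phi_Psi {s : ℝ} (hs : s ∈ Ioo 0 1) : Phi (Psi s) = s :=
  Function.invFun_eq (mem_range_Phi hs)

lemma Psi_lt_iff {s t : ℝ} (hs : s ∈ Ioo 0 1) : Psi s < t ↔ s < Phi t := by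
  rw [← strictMono_Phi.lt_iff_lt, Phi_Psi hs]

lemma lt_Psi_iff {s t : ℝ} (hs : s ∈ Ioo 0 1) : t < Psi s ↔ Phi t < s := by
  rw [← strictMono_Phi.lt_iff_lt, Phi_Psi hs]

lemma strictMonoOn_Psi : StrictMonoOn Psi (Ioo 0 1) := fun a ha b hb hab => by
  rwa [lt_Psi_iff hb, Phi_Psi ha]

lemma continuousAt_Psi {s : ℝ} (hs : s ∈ Ioo 0 1) : ContinuousAt Psi s := by
  refine strictMonoOn_Psi.continuousAt_of_image_mem_nhds (isOpen_Ioo.mem_nhds hs) ?_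
  have himage : Psi '' Ioo 0 1 = univ :=
    eq_univ_of_forall fun t => ⟨Phi t, Phi_mem_Ioo t, Psi_Phi t⟩
  exact himage ▸ univ_mem

lemma hasDerivAt_Psi {s : ℝ} (hs : s ∈ Ioo 0 1) : HasDerivAt Psi (phi (Psi s))⁻¹ s :=
  (hasDerivAt_Phi (Psi s)).of_local_left_inverse (continuousAt_Psi hs) (phi_pos _).ne' <|
    eventually_of_mem (isOpen_Ioo.mem_nhds hs) fun _ => Phi_Psi

lemma tendsto_Psi_nhdsGT_zero : Tendsto Psi (𝓝[>] 0) atBot := by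
  refine tendsto_atBot.2 fun b => ?_
  filter_upwards [Ioo_mem_nhdsGT (Phi_mem_Ioo b).1] with s hs
  exact ((Psi_lt_iff ⟨hs.1, hs.2.trans (Phi_mem_Ioo b).2⟩).2 hs.2).le

lemma tendsto_Psi_nhdsLT_one : Tendsto Psi (𝓝[<] 1) atTop := by
  refine tendsto_atTop.2 fun b => ?_
  filter_upwards [Ioo_mem_nhdsLT (Phi_mem_Ioo b).2] with s hs
  exact ((lt_Psi_iff ⟨(Phi_mem_Ioo b).1.trans hs.1, hs.2⟩).2 hs.1).le

lemma Q_eq_phi_Psi {s : ℝ} (hs : s ∈ Ioo 0 1) : Q s = phi (Psi s) := if_pos hs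

lemma Q_eq_zero_of_notMem {s : ℝ} (hs : s ∉ Ioo 0 1) : Q s = 0 := if_neg hs

lemma Q_zero : Q 0 = 0 := Q_eq_zero_of_notMem fun h => h.1.false

lemma Q_one : Q 1 = 0 := Q_eq_zero_of_notMem fun h => h.2.false

lemma Q_pos {s : ℝ} (hs : s ∈ Ioo 0 1) : 0 < Q s := Q_eq_phi_Psi hs ▸ phi_pos _

lemma Q_lt_half (s : ℝ) : Q s < 1 / 2 := by
  by_cases hs : s ∈ Ioo 0 1
  · exact Q_eq_phi_Psi hs ▸ phi_lt_half _
  · rw [Q_eq_zero_of_notMem hs]; norm_num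

lemma hasDerivAt_Q {s : ℝ} (hs : s ∈ Ioo 0 1) : HasDerivAt Q (-Psi s) s := by
  have h := (hasDerivAt_phi (Psi s)).comp s (hasDerivAt_Psi hs)
  rw [mul_assoc, mul_inv_cancel₀ (phi_pos _).ne', mul_one] at h
  exact h.congr_of_eventuallyEq
    (eventually_of_mem (isOpen_Ioo.mem_nhds hs) fun _ => Q_eq_phi_Psi)

lemma tendsto_Q_nhdsGT_zero : Tendsto Q (𝓝[>] 0) (𝓝 0) :=
  ((tendsto_phi_cocompact.mono_left atBot_le_cocompact).comp tendsto_Psi_nhdsGT_zero).congr' <|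
    eventually_of_mem (Ioo_mem_nhdsGT one_pos) fun _ hs => (Q_eq_phi_Psi hs).symm

lemma tendsto_Q_nhdsLT_one : Tendsto Q (𝓝[<] 1) (𝓝 0) :=
  ((tendsto_phi_cocompact.mono_left atTop_le_cocompact).comp tendsto_Psi_nhdsLT_one).congr' <|
    eventually_of_mem (Ioo_mem_nhdsLT one_pos) fun _ hs => (Q_eq_phi_Psi hs).symm

lemma continuous_Q : Continuous Q := by
  have hzero : ∀ {x}, x ∉ Ioo (0 : ℝ) 1 → ContinuousWithinAt Q (Ioo 0 1)ᶜ x := fun hx =>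
    continuousWithinAt_const.congr (fun _ hy => Q_eq_zero_of_notMem hy) (Q_eq_zero_of_notMem hx)
  refine continuous_iff_continuousAt.2 fun x => ?_
  by_cases hx : x ∈ Ioo 0 1
  · exact (hasDerivAt_Q hx).continuousAt
  rcases lt_or_ge x 0 with hx0 | hx0
  · exact (hzero hx).continuousAt
      (mem_of_superset (Iio_mem_nhds hx0) fun y hy h => h.1.not_gt hy)
  rcases hx0.eq_or_lt with rfl | hx0
  · refine continuousAt_iff_continuous_left_right.2
      ⟨(hzero hx).mono fun y hy h => h.1.not_ge hy, ?_⟩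
    rw [← continuousWithinAt_Ioi_iff_Ici, ContinuousWithinAt, Q_zero]
    exact tendsto_Q_nhdsGT_zero
  have hx1 : 1 ≤ x := not_lt.1 fun h => hx ⟨hx0, h⟩
  rcases hx1.eq_or_lt with rfl | hx1
  · refine continuousAt_iff_continuous_left_right.2
      ⟨?_, (hzero hx).mono fun y hy h => h.2.not_ge hy⟩
    rw [← continuousWithinAt_Iio_iff_Iic, ContinuousWithinAt, Q_one]
    exact tendsto_Q_nhdsLT_one
  · exact (hzero hx).continuousAt
      (mem_of_superset (Ioi_mem_nhds hx1) fun y hy h => h.2.not_gt hy)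

lemma concaveOn_Q : ConcaveOn ℝ (Icc 0 1) Q := by
  refine AntitoneOn.concaveOn_of_deriv (convex_Icc 0 1) continuous_Q.continuousOn ?_ ?_
  · rw [interior_Icc]
    exact fun s hs => (hasDerivAt_Q hs).differentiableAt.differentiableWithinAt
  · rw [interior_Icc]
    intro a ha b hb hab
    rw [(hasDerivAt_Q ha).deriv, (hasDerivAt_Q hb).deriv, neg_le_neg_iff]
    exact strictMonoOn_Psi.monotoneOn ha hb hab

lemma neg_mul_Phi_le_phi (t : ℝ) : -t * Phi t ≤ phi t := by
  have hint : Integrable fun u => -u * phi u := by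
    refine ((integrable_mul_exp_neg_mul_sq (by norm_num : (0 : ℝ) < 1 / 2)).const_mul
      (-(Real.sqrt (2 * π))⁻¹)).congr (ae_of_all _ fun u => ?_)
    simp only [phi]
    ring_nf
  have hphi : ∫ u in Iic t, -u * phi u = phi t := by
    simpa using integral_Iic_of_hasDerivAt_of_tendsto' (fun u _ => hasDerivAt_phi u)
      hint.integrableOn (tendsto_phi_cocompact.mono_left atBot_le_cocompact)
  calc -t * Phi t = ∫ u in Iic t, -t * phi u := (integral_const_mul _ _).symm
    _ ≤ ∫ u in Iic t, -u * phi u :=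
      setIntegral_mono_on (integrable_phi.integrableOn.const_mul _) hint.integrableOn
        measurableSet_Iic fun u hu => mul_le_mul_of_nonneg_right (neg_le_neg hu) (phi_pos u).le
    _ = phi t := hphi

lemma tendsto_mul_Psi_nhdsGT_zero : Tendsto (fun s => s * Psi s) (𝓝[>] 0) (𝓝 0) := by
  refine squeeze_zero_norm' ?_ tendsto_Q_nhdsGT_zero
  filter_upwards [Ioo_mem_nhdsGT (Phi_mem_Ioo 0).1] with s hs
  have hs01 : s ∈ Ioo 0 1 := ⟨hs.1, hs.2.trans (Phi_mem_Ioo 0).2⟩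
  have hPsi : Psi s < 0 := (Psi_lt_iff hs01).2 hs.2
  have hMills := neg_mul_Phi_le_phi (Psi s)
  rw [Phi_Psi hs01] at hMills
  rw [norm_of_nonpos (mul_neg_of_pos_of_neg hs.1 hPsi).le, Q_eq_phi_Psi hs01]
  linarith

lemma sq_le_Q_add_mul_Psi {h : ℝ} (hh : h ∈ Ioo 0 1) : h ^ 2 ≤ Q h + h * Psi h := by
  set K : ℝ → ℝ := fun s => Q s + s * Psi s - s ^ 2
  have hK : ∀ s ∈ Ioo (0 : ℝ) 1, HasDerivAt K (s * ((Q s)⁻¹ - 2)) s := fun s hs => by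
    have hPsi := Q_eq_phi_Psi hs ▸ hasDerivAt_Psi hs
    exact (((hasDerivAt_Q hs).add ((hasDerivAt_id s).mul hPsi)).sub
      (hasDerivAt_pow 2 s)).congr_deriv (by simp; ring)
  have hmono : StrictMonoOn K (Ioo 0 1) := by
    refine strictMonoOn_of_deriv_pos (convex_Ioo 0 1)
      (fun s hs => (hK s hs).continuousAt.continuousWithinAt) fun s hs => ?_
    rw [interior_Ioo] at hs
    rw [(hK s hs).deriv]
    have hQ : 2 < (Q s)⁻¹ := by
      rw [lt_inv_comm₀ two_pos (Q_pos hs)]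
      exact (Q_lt_half s).trans_eq (one_div 2)
    exact mul_pos hs.1 (sub_pos.2 hQ)
  have hlim : Tendsto K (𝓝[>] 0) (𝓝 0) := by
    have hsq : Tendsto (fun s : ℝ => s ^ 2) (𝓝[>] 0) (𝓝 0) :=
      ((continuous_pow 2).tendsto' 0 0 (by norm_num)).mono_left nhdsWithin_le_nhds
    simpa using (tendsto_Q_nhdsGT_zero.add tendsto_mul_Psi_nhdsGT_zero).sub hsq
  have hKh : 0 ≤ K h := le_of_tendsto hlim <| eventually_of_mem (Ioo_mem_nhdsGT hh.1)
    fun s hs => (hmono ⟨hs.1, hs.2.trans hh.2⟩ hh hs.2).le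
  simp only [K] at hKh
  linarith

section Gap

variable {h t c : ℝ}

noncomputable def gap (h t : ℝ) : ℝ :=
  h⁻¹ ^ 2 * (Q h - Q t) + (h⁻¹ - h⁻¹ ^ 2 * Psi h) * (t - h) - t / h * log (t / h)

noncomputable def gapDeriv (h t : ℝ) : ℝ := h⁻¹ ^ 2 * (Psi t - Psi h) - h⁻¹ * log (t / h)

lemma gap_self (hh : h ≠ 0) : gap h h = 0 := by
  simp [gap, div_self hh]

lemma gap_zero_nonneg (hh : h ∈ Ioo 0 1) : 0 ≤ gap h 0 := by
  have hK := sq_le_Q_add_mul_Psi hh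
  have hgap : gap h 0 = h⁻¹ ^ 2 * (Q h + h * Psi h - h ^ 2) := by
    simp only [gap, Q_zero, zero_div, log_zero, mul_zero, sub_zero]
    field_simp
    ring
  rw [hgap]
  exact mul_nonneg (by positivity) (sub_nonneg.2 hK)

lemma continuous_gap : Continuous (gap h) := by
  unfold gap
  have := continuous_mul_log.comp (continuous_id.div_const h)
  have := continuous_Q
  fun_prop

lemma hasDerivAt_gap (hh : h ≠ 0) (ht : t ∈ Ioo 0 1) : HasDerivAt (gap h) (gapDeriv h t) t := by
  have hQ := ((hasDerivAt_Q ht).const_sub (Q h)).const_mul (h⁻¹ ^ 2)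
  have hlin := ((hasDerivAt_id t).sub_const h).const_mul (h⁻¹ - h⁻¹ ^ 2 * Psi h)
  have hlog := (hasDerivAt_mul_log (div_ne_zero ht.1.ne' hh)).comp t
    ((hasDerivAt_id t).div_const h)
  exact ((hQ.add hlin).sub hlog).congr_deriv (by simp only [gapDeriv]; field_simp; ring)

lemma hasDerivAt_gapDeriv (hh : h ≠ 0) (ht : t ∈ Ioo 0 1) :
    HasDerivAt (gapDeriv h) ((t - h * Q t) / (h ^ 2 * t * Q t)) t := by
  have hPsi := ((Q_eq_phi_Psi ht ▸ hasDerivAt_Psi ht).sub_const (Psi h)).const_mul (h⁻¹ ^ 2)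
  have hlog := ((hasDerivAt_log (div_ne_zero ht.1.ne' hh)).comp t
    ((hasDerivAt_id t).div_const h)).const_mul h⁻¹
  have := ht.1.ne'
  have := (Q_pos ht).ne'
  exact (hPsi.sub hlog).congr_deriv (by field_simp)

lemma gap_nonneg_of_mul_Q_le (hc0 : 0 ≤ c) (hch : c < h) (hh1 : h < 1)
    (hu : ∀ s ∈ Ioo c 1, h * Q s ≤ s) : ∀ t ∈ Icc c 1, 0 ≤ gap h t := by
  have hh : h ≠ 0 := (hc0.trans_lt hch).ne'
  have hmem : ∀ s ∈ interior (Icc c 1), s ∈ Ioo (0 : ℝ) 1 := fun s hs => by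
    rw [interior_Icc] at hs
    exact ⟨hc0.trans_lt hs.1, hs.2⟩
  have hconv : ConvexOn ℝ (Icc c 1) (gap h) := by
    refine convexOn_of_hasDerivWithinAt2_nonneg (convex_Icc c 1) continuous_gap.continuousOn
      (fun s hs => (hasDerivAt_gap hh (hmem s hs)).hasDerivWithinAt)
      (fun s hs => (hasDerivAt_gapDeriv hh (hmem s hs)).hasDerivWithinAt) fun s hs => ?_
    have := Q_pos (hmem s hs)
    have := (hmem s hs).1
    rw [interior_Icc] at hs
    exact div_nonneg (sub_nonneg.2 (hu s hs)) (by positivity)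
  have hderiv : derivWithin (gap h) (Ioi h) h = 0 := by
    rw [(hasDerivAt_gap hh ⟨hc0.trans_lt hch, hh1⟩).hasDerivWithinAt.derivWithin
      (uniqueDiffWithinAt_Ioi h)]
    simp [gapDeriv, div_self hh]
  have hmin : IsMinOn (gap h) (Icc c 1) h :=
    hconv.isMinOn_of_rightDeriv_eq_zero (by rw [interior_Icc]; exact ⟨hch, hh1⟩) hderiv
  exact fun t ht => gap_self hh ▸ hmin ht

lemma concaveOn_gap (hh : h ≠ 0) (hc1 : c < 1) (hu : ∀ s ∈ Ioo 0 c, s ≤ h * Q s) :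
    ConcaveOn ℝ (Icc 0 c) (gap h) := by
  have hmem : ∀ s ∈ interior (Icc 0 c), s ∈ Ioo (0 : ℝ) 1 := fun s hs => by
    rw [interior_Icc] at hs
    exact ⟨hs.1, hs.2.trans hc1⟩
  refine concaveOn_of_hasDerivWithinAt2_nonpos (convex_Icc 0 c) continuous_gap.continuousOn
    (fun s hs => (hasDerivAt_gap hh (hmem s hs)).hasDerivWithinAt)
    (fun s hs => (hasDerivAt_gapDeriv hh (hmem s hs)).hasDerivWithinAt) fun s hs => ?_
  have := Q_pos (hmem s hs)
  have := (hmem s hs).1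
  rw [interior_Icc] at hs
  exact div_nonpos_of_nonpos_of_nonneg (sub_nonpos.2 (hu s hs)) (by positivity)

lemma gap_nonneg (hh : h ∈ Ioo 0 1) (ht : t ∈ Icc 0 1) : 0 ≤ gap h t := by
  have hQh : Q h < 1 := (Q_lt_half h).trans (by norm_num)
  have hconv : ConvexOn ℝ (Icc 0 1) fun s => s - h * Q s :=
    (convexOn_id (convex_Icc 0 1)).sub (concaveOn_Q.smul hh.1.le)
  obtain ⟨c, hc, hneg, hpos⟩ := hconv.exists_nonpos_Icc_pos_Ioc zero_le_one
    (continuous_id.sub (continuous_const.mul continuous_Q)).continuousOn (by simp [Q_zero])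
    (by simp [Q_one])
  have hch : c < h := lt_of_not_ge fun hhc =>
    (hneg h ⟨hh.1.le, hhc⟩).not_gt (by nlinarith [hh.1])
  have hright := gap_nonneg_of_mul_Q_le hc.1 hch hh.2 fun s hs =>
    sub_nonneg.1 (hpos s ⟨hs.1, hs.2.le⟩).le
  have hconc := concaveOn_gap hh.1.ne' hc.2 fun s hs => sub_nonpos.1 (hneg s ⟨hs.1.le, hs.2.le⟩)
  rcases le_total c t with hct | htc
  · exact hright t ⟨hct, ht.2⟩
  · calc 0 ≤ min (gap h 0) (gap h c) :=
          le_min (gap_zero_nonneg hh) (hright c ⟨le_rfl, hc.2.le⟩)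
      _ ≤ gap h t :=
        hconc.min_le_of_mem_Icc (left_mem_Icc.2 hc.1) (right_mem_Icc.2 hc.1) ⟨ht.1, htc⟩

end Gap

section Integral

variable {Ω : Type*} [MeasurableSpace Ω] {μ : Measure Ω} [IsProbabilityMeasure μ]
  {f : Ω → ℝ} {h : ℝ}

lemma integral_mul_log_div_le_of_lt_one (hf : AEStronglyMeasurable f μ)
    (hf01 : ∀ x, f x ∈ Icc 0 1) (hint : ∫ x, f x ∂μ = h) (hh : h ∈ Ioo 0 1) :
    ∫ x, f x / h * log (f x / h) ∂μ ≤ h⁻¹ ^ 2 * ∫ x, (Q h - Q (f x)) ∂μ := by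
  have hintegrable : ∀ {g : ℝ → ℝ}, Continuous g → Integrable (fun x => g (f x)) μ :=
    fun hg => hg.integrable_comp_of_forall_mem isCompact_Icc hf hf01
  have hfint : Integrable f μ := hintegrable continuous_id
  have hfsub : Integrable (fun x => f x - h) μ := hfint.sub (integrable_const h)
  have hQ : Continuous fun t => Q h - Q t := continuous_const.sub continuous_Q
  set a := h⁻¹ - h⁻¹ ^ 2 * Psi h
  calc ∫ x, f x / h * log (f x / h) ∂μ
      ≤ ∫ x, (h⁻¹ ^ 2 * (Q h - Q (f x)) + a * (f x - h)) ∂μ :=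
        integral_mono (hintegrable (continuous_mul_log.comp (continuous_id.div_const h)))
          (hintegrable ((hQ.const_mul _).add ((continuous_id.sub continuous_const).const_mul a)))
          fun x => sub_nonneg.1 (gap_nonneg hh (hf01 x))
    _ = h⁻¹ ^ 2 * ∫ x, (Q h - Q (f x)) ∂μ := by
        rw [integral_add ((hintegrable hQ).const_mul _) (hfsub.const_mul a), integral_const_mul,
          integral_const_mul, integral_sub hfint (integrable_const h), hint]
        simp

lemma integral_mul_log_div_le (hf : AEStronglyMeasurable f μ) (hf01 : ∀ x, f x ∈ Icc 0 1)
    (hint : ∫ x, f x ∂μ = h) (hh0 : 0 < h) (hh1 : h ≤ 1) :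
    ∫ x, f x / h * log (f x / h) ∂μ ≤ h⁻¹ ^ 2 * ∫ x, (Q h - Q (f x)) ∂μ := by
  rcases hh1.lt_or_eq with hh1 | rfl
  · exact integral_mul_log_div_le_of_lt_one hf hf01 hint ⟨hh0, hh1⟩
  have hfint : Integrable f μ :=
    continuous_id.integrable_comp_of_forall_mem isCompact_Icc hf hf01
  have hone := ae_eq_one_of_integral_eq_one hfint (fun x => (hf01 x).2) hint
  have hentropy : ∫ x, f x / 1 * log (f x / 1) ∂μ = 0 :=
    integral_eq_zero_of_ae (hone.mono fun x hx => by simp [hx])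
  have hQ : ∫ x, (Q 1 - Q (f x)) ∂μ = 0 :=
    integral_eq_zero_of_ae (hone.mono fun x hx => by simp [hx])
  rw [hentropy, hQ, mul_zero]

end Integral

end EntropyBound

instance isProbabilityMeasure_stdGaussian (n : ℕ) : IsProbabilityMeasure (stdGaussian n) :=
  Measure.isProbabilityMeasure_map (MeasurableEquiv.measurable _).aemeasurable

open EntropyBound in
theorem entropy_bound (n : ℕ) (h : ℝ) (hh0 : 0 < h) (hh1 : h ≤ 1)
    (f : EuclideanSpace ℝ (Fin n) → ℝ) (hf : Measurable f)
    (hf01 : ∀ x, f x ∈ Set.Icc (0 : ℝ) 1)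
    (hint : ∫ x, f x ∂stdGaussian n = h) :
    ∫ x, (f x / h) * Real.log (f x / h) ∂stdGaussian n
      ≤ h⁻¹ ^ 2 * ∫ x, (Q h - Q (f x)) ∂stdGaussian n :=
  integral_mul_log_div_le hf.aestronglyMeasurable hf01 hint hh0 hh1
end

section
/- Let B_t be the matrix-valued function B = ∫_A (x ⊗ x − Id) dγⁿ(x) for a measurable set A ⊆ ℝⁿ. Then B² ≤ 4·Id in the positive semi-definite order; in particular |⟨B u, u⟩| ≤ 2 for every unit vector u. -/
open MeasureTheory ProbabilityTheory Real Set Filter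

/-!
For a unit vector `u`, `⟨B u, u⟩ = ∫_A (⟨u, x⟩² - 1) dγⁿ`. Since `0 ≤ ∫_A ⟨u, x⟩² ≤ ∫ ⟨u, x⟩² = 1`
and `0 ≤ γⁿ(A) ≤ 1`, this lies in `[-1, 1]`. A symmetric matrix whose quadratic form is bounded
by `|u|²` has `|B u| ≤ |u|` (polarization), so `B² ≤ Id ≤ 4 Id`.
-/

open Matrix
open scoped RealInnerProductSpace

lemma abs_setIntegral_sub_integral_le_integral {α : Type*} [MeasurableSpace α] {μ : Measure α}
    [IsProbabilityMeasure μ] {g : α → ℝ} (hg : Integrable g μ) (hg₀ : 0 ≤ g) (s : Set α) :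
    |∫ x in s, (g x - ∫ y, g y ∂μ) ∂μ| ≤ ∫ y, g y ∂μ := by
  have hsplit : ∫ x in s, (g x - ∫ y, g y ∂μ) ∂μ = ∫ x in s, g x ∂μ - μ.real s * ∫ y, g y ∂μ := by
    rw [integral_sub hg.restrict (integrable_const _), setIntegral_const, smul_eq_mul]
  have hset_nonneg : 0 ≤ ∫ x in s, g x ∂μ := integral_nonneg hg₀
  have hset_le : ∫ x in s, g x ∂μ ≤ ∫ y, g y ∂μ := setIntegral_le_integral hg (ae_of_all _ hg₀)
  have hμs : μ.real s ≤ 1 := measureReal_le_one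
  rw [hsplit, abs_le]
  constructor <;> nlinarith [measureReal_nonneg (μ := μ) (s := s)]

theorem Matrix.IsHermitian.posSemidef_one_sub_mul_self {ι : Type*} [Fintype ι] [DecidableEq ι]
    {B : Matrix ι ι ℝ} (hB : B.IsHermitian) (h : ∀ x, |x ⬝ᵥ B *ᵥ x| ≤ x ⬝ᵥ x) :
    (1 - B * B).PosSemidef := by
  have hsymm : ∀ x y, x ⬝ᵥ B *ᵥ y = y ⬝ᵥ B *ᵥ x := fun x y => by
    rw [dotProduct_mulVec, ← mulVec_transpose, ← conjTranspose_eq_transpose_of_trivial, hB.eq,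
      dotProduct_comm]
  have hherm : (1 - B * B).IsHermitian := by
    simpa only [hB.eq] using isHermitian_one.sub (isHermitian_conjTranspose_mul_self B)
  refine posSemidef_iff_dotProduct_mulVec.2 ⟨hherm, fun x => ?_⟩
  set w := B *ᵥ x
  have hpolar : (x + w) ⬝ᵥ B *ᵥ (x + w) - (x - w) ⬝ᵥ B *ᵥ (x - w) = 4 * (w ⬝ᵥ w) := by
    have hw : x ⬝ᵥ B *ᵥ w = w ⬝ᵥ w := by rw [hsymm]
    simp only [mulVec_add, mulVec_sub, dotProduct_add, dotProduct_sub, add_dotProduct,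
      sub_dotProduct, hsymm w x, hw]
    ring
  have hplus := (le_abs_self _).trans (h (x + w))
  have hminus := (neg_le_abs _).trans (h (x - w))
  have hparallelogram :
      (x + w) ⬝ᵥ (x + w) + (x - w) ⬝ᵥ (x - w) = 2 * (x ⬝ᵥ x) + 2 * (w ⬝ᵥ w) := by
    simp only [dotProduct_add, dotProduct_sub, add_dotProduct, sub_dotProduct,
      dotProduct_comm w x]
    ring
  have hquad : x ⬝ᵥ (1 - B * B) *ᵥ x = x ⬝ᵥ x - w ⬝ᵥ w := by
    rw [sub_mulVec, one_mulVec, dotProduct_sub, ← mulVec_mulVec, hsymm]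
  rw [star_trivial, hquad]
  linarith

namespace EuclideanSpace

variable {ι : Type*} [Fintype ι] [DecidableEq ι]

lemma sum_sum_mul_coord_mul_sub_ite_mul (u x : EuclideanSpace ℝ ι) :
    ∑ i, ∑ j, u i * (x i * x j - if i = j then 1 else 0) * u j = ⟪u, x⟫ ^ 2 - ‖u‖ ^ 2 := by
  have hinner : ⟪u, x⟫ = ∑ i, u i * x i := by
    simp [PiLp.inner_apply, mul_comm]
  rw [hinner, real_norm_sq_eq, sq, Finset.sum_mul_sum]
  simp only [mul_sub, sub_mul, Finset.sum_sub_distrib, mul_ite, ite_mul, mul_one, mul_zero,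
    zero_mul, Finset.sum_ite_eq, Finset.mem_univ, if_true, sq]
  congr 1
  exact Finset.sum_congr rfl fun i _ => Finset.sum_congr rfl fun j _ => by ring

lemma sum_sum_mul_setIntegral_coord_mul_sub_ite_mul {μ : Measure (EuclideanSpace ℝ ι)}
    [IsFiniteMeasure μ] (hμ : ∀ i j, Integrable (fun x : EuclideanSpace ℝ ι => x i * x j) μ)
    (s : Set (EuclideanSpace ℝ ι)) (u : EuclideanSpace ℝ ι) :
    ∑ i, ∑ j, u i * (∫ x in s, (x i * x j - if i = j then 1 else 0) ∂μ) * u j =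
      ∫ x in s, (⟪u, x⟫ ^ 2 - ‖u‖ ^ 2) ∂μ := by
  have hint : ∀ i j, Integrable
      (fun x : EuclideanSpace ℝ ι => u i * (x i * x j - if i = j then 1 else 0) * u j)
      (μ.restrict s) := fun i j =>
    (((hμ i j).restrict.sub (integrable_const _)).const_mul _).mul_const _
  simp_rw [← sum_sum_mul_coord_mul_sub_ite_mul, ← integral_const_mul, ← integral_mul_const]
  rw [integral_finsetSum _ fun i _ => integrable_finsetSum _ fun j _ => hint i j]
  exact Finset.sum_congr rfl fun i _ => (integral_finsetSum _ fun j _ => hint i j).symm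

end EuclideanSpace

namespace ProbabilityTheory

section StdGaussian

variable {E : Type*} [NormedAddCommGroup E] [InnerProductSpace ℝ E] [FiniteDimensional ℝ E]
  [MeasurableSpace E] [BorelSpace E]

lemma integrable_inner_mul_inner_stdGaussian (u v : E) :
    Integrable (fun x => ⟪u, x⟫ * ⟪v, x⟫) (stdGaussian E) :=
  ((innerSL ℝ u).comp_memLp' IsGaussian.memLp_two_id).integrable_mul
    ((innerSL ℝ v).comp_memLp' IsGaussian.memLp_two_id)

lemma integral_inner_sq_stdGaussian (u : E) :
    ∫ x, ⟪u, x⟫ ^ 2 ∂(stdGaussian E) = ‖u‖ ^ 2 := by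
  have h := covarianceBilin_apply (μ := stdGaussian E) IsGaussian.memLp_two_id u u
  rw [covarianceBilin_stdGaussian, innerSL_apply_apply ℝ, real_inner_self_eq_norm_sq] at h
  simpa only [id_eq, integral_id_stdGaussian, sub_zero, ← sq] using h.symm

end StdGaussian

lemma integrable_coord_mul_coord_stdGaussian {ι : Type*} [Fintype ι] (i j : ι) :
    Integrable (fun x : EuclideanSpace ℝ ι => x i * x j) (stdGaussian (EuclideanSpace ℝ ι)) := by
  classical
  simpa [EuclideanSpace.inner_single_left] using
    integrable_inner_mul_inner_stdGaussian (EuclideanSpace.single i (1 : ℝ))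
      (EuclideanSpace.single j 1)

lemma abs_sum_sum_mul_setIntegral_stdGaussian_le {ι : Type*} [Fintype ι] [DecidableEq ι]
    (s : Set (EuclideanSpace ℝ ι)) (u : EuclideanSpace ℝ ι) :
    |∑ i, ∑ j, u i * (∫ x in s, (x i * x j - if i = j then 1 else 0)
      ∂stdGaussian (EuclideanSpace ℝ ι)) * u j| ≤ ‖u‖ ^ 2 := by
  have hint : Integrable (fun x => ⟪u, x⟫ ^ 2) (stdGaussian (EuclideanSpace ℝ ι)) := by
    simpa only [sq] using integrable_inner_mul_inner_stdGaussian u u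
  calc _ = |∫ x in s, (⟪u, x⟫ ^ 2 - ∫ y, ⟪u, y⟫ ^ 2 ∂stdGaussian (EuclideanSpace ℝ ι))
          ∂stdGaussian (EuclideanSpace ℝ ι)| := by
        rw [EuclideanSpace.sum_sum_mul_setIntegral_coord_mul_sub_ite_mul
          integrable_coord_mul_coord_stdGaussian, integral_inner_sq_stdGaussian]
    _ ≤ ∫ y, ⟪u, y⟫ ^ 2 ∂stdGaussian (EuclideanSpace ℝ ι) :=
        abs_setIntegral_sub_integral_le_integral hint (fun _ => sq_nonneg _) s
    _ = ‖u‖ ^ 2 := integral_inner_sq_stdGaussian u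

end ProbabilityTheory

theorem covariance_matrix_bound_general (n : ℕ) (A : Set (EuclideanSpace ℝ (Fin n))) :
    let B : Matrix (Fin n) (Fin n) ℝ :=
      Matrix.of fun i j =>
        ∫ x in A, (x i * x j - if i = j then 1 else 0) ∂stdGaussian n
    Matrix.PosSemidef ((4 : ℝ) • (1 : Matrix (Fin n) (Fin n) ℝ) - B * B) ∧
    ∀ u : EuclideanSpace ℝ (Fin n), ‖u‖ = 1 →
      |∑ i, ∑ j, u i * B i j * u j| ≤ 2 := by
  intro B
  have hγ : stdGaussian n = ProbabilityTheory.stdGaussian (EuclideanSpace ℝ (Fin n)) :=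
    map_pi_eq_stdGaussian
  have hquad (u : EuclideanSpace ℝ (Fin n)) : |∑ i, ∑ j, u i * B i j * u j| ≤ ‖u‖ ^ 2 := by
    simpa only [B, of_apply, hγ] using abs_sum_sum_mul_setIntegral_stdGaussian_le A u
  have hB : B.IsHermitian := IsHermitian.ext fun i j => by
    simp [B, mul_comm, eq_comm]
  have hdot (x : Fin n → ℝ) : |x ⬝ᵥ B *ᵥ x| ≤ x ⬝ᵥ x := by
    have h := hquad (WithLp.toLp 2 x)
    rw [EuclideanSpace.real_norm_sq_eq] at h
    rw [← toBilin'_apply', toBilin'_apply]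
    simpa only [PiLp.toLp_apply, dotProduct, sq] using h
  refine ⟨?_, fun u hu => (hquad u).trans (by rw [hu]; norm_num)⟩
  have hsplit : (4 : ℝ) • (1 : Matrix (Fin n) (Fin n) ℝ) - B * B = (3 : ℝ) • 1 + (1 - B * B) := by
    rw [show (4 : ℝ) = 3 + 1 by norm_num, add_smul, one_smul]
    abel
  rw [hsplit]
  exact (PosSemidef.one.smul (by norm_num)).add (hB.posSemidef_one_sub_mul_self hdot)

theorem covariance_matrix_bound (n : ℕ) (A : Set (EuclideanSpace ℝ (Fin n)))
    (hA : MeasurableSet A) :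
    let B : Matrix (Fin n) (Fin n) ℝ :=
      Matrix.of fun i j =>
        ∫ x in A, (x i * x j - if i = j then 1 else 0) ∂stdGaussian n
    Matrix.PosSemidef ((4 : ℝ) • (1 : Matrix (Fin n) (Fin n) ℝ) - B * B) ∧
    ∀ u : EuclideanSpace ℝ (Fin n), ‖u‖ = 1 →
      |∑ i, ∑ j, u i * B i j * u j| ≤ 2 :=
  covariance_matrix_bound_general n A
end
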